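/- arXiv:2312.06724 — 2 statements merged into one kernel-verified Lean document; each statement's English description precedes it below -/
import Mathlib

section
/- Push invariant: if nonnegative functions π̂ : U → ℝ and r : U → ℝ satisfy the invariant π(u_i,u) = π̂(u_i) + ∑_{u_j ∈ U} π(u_i,u_j)·r(u_j) for all u_i ∈ U, then after a push at node u_x (setting π̂'(u_x) = π̂(u_x) + α·r(u_x), r'(u_x) = 0 plus the contribution (1-α)·P(u_x,u_x)·r(u_x), and r'(u_j) = r(u_j) + (1-α)·P(u_j,u_x)·r(u_x) for u_j ≠ u_x, π̂'(u_i) = π̂(u_i) for u_i ≠ u_x), the invariant still holds: π(u_i,u) = π̂'(u_i) + ∑_{u_j ∈ U} π(u_i,u_j)·r'(u_j) for all u_i ∈ U. -/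
noncomputable def hpp {U : Type*} [Fintype U] [DecidableEq U]
    (P : Matrix U U ℝ) (α : ℝ) (u ui : U) : ℝ :=
  ∑' ℓ : ℕ, α * (1 - α) ^ ℓ * (P ^ ℓ) u ui

lemma pow_entry_nonneg {U : Type*} [Fintype U] [DecidableEq U]
    (P : Matrix U U ℝ) (hnn : ∀ i j, 0 ≤ P i j) (ℓ : ℕ) (i j : U) :
    0 ≤ (P ^ ℓ) i j := by
  induction ℓ generalizing i j with
  | zero => simp [Matrix.one_apply]; positivity
  | succ n ih =>
      rw [pow_succ, Matrix.mul_apply]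
      exact Finset.sum_nonneg fun k _ => mul_nonneg (ih i k) (hnn k j)

lemma pow_entry_le_one {U : Type*} [Fintype U] [DecidableEq U]
    (P : Matrix U U ℝ) (hnn : ∀ i j, 0 ≤ P i j) (hrow : ∀ i, ∑ j, P i j = 1)
    (ℓ : ℕ) (i j : U) : (P ^ ℓ) i j ≤ 1 := by
  have hsum : ∀ ℓ i, ∑ j, (P ^ ℓ) i j = 1 := by
    intro ℓ
    induction ℓ with
    | zero => intro i; simp [Matrix.one_apply]
    | succ n ih =>
        intro i
        simp only [pow_succ, Matrix.mul_apply]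
        rw [Finset.sum_comm]
        calc ∑ k, ∑ x, (P ^ n) i k * P k x
            = ∑ k, (P ^ n) i k * ∑ x, P k x := by
              simp [Finset.mul_sum]
          _ = 1 := by simp [hrow, ih]
  calc (P ^ ℓ) i j ≤ ∑ j, (P ^ ℓ) i j :=
        Finset.single_le_sum (fun k _ => pow_entry_nonneg P hnn ℓ i k) (Finset.mem_univ j)
    _ = 1 := hsum ℓ i

lemma hpp_summable {U : Type*} [Fintype U] [DecidableEq U]
    (P : Matrix U U ℝ) (hnn : ∀ i j, 0 ≤ P i j) (hrow : ∀ i, ∑ j, P i j = 1)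
    (α : ℝ) (hα0 : 0 < α) (hα1 : α < 1) (i j : U) :
    Summable (fun ℓ : ℕ => α * (1 - α) ^ ℓ * (P ^ ℓ) i j) := by
  have hgeo : Summable (fun ℓ : ℕ => α * (1 - α) ^ ℓ) :=
    (summable_geometric_of_lt_one (by linarith) (by linarith)).mul_left α
  refine hgeo.of_nonneg_of_le ?_ ?_
  · intro ℓ
    exact mul_nonneg (mul_nonneg hα0.le (pow_nonneg (by linarith) ℓ))
      (pow_entry_nonneg P hnn ℓ i j)
  · intro ℓ
    calc α * (1 - α) ^ ℓ * (P ^ ℓ) i j ≤ α * (1 - α) ^ ℓ * 1 :=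
          mul_le_mul_of_nonneg_left (pow_entry_le_one P hnn hrow ℓ i j)
            (mul_nonneg hα0.le (pow_nonneg (by linarith) ℓ))
      _ = α * (1 - α) ^ ℓ := mul_one _

lemma hpp_key {U : Type*} [Fintype U] [DecidableEq U]
    (P : Matrix U U ℝ) (hnn : ∀ i j, 0 ≤ P i j) (hrow : ∀ i, ∑ j, P i j = 1)
    (α : ℝ) (hα0 : 0 < α) (hα1 : α < 1) (i x : U) :
    hpp P α i x = α * (if i = x then 1 else 0)
      + (1 - α) * ∑ j, hpp P α i j * P j x := by
  have hsummable := hpp_summable P hnn hrow α hα0 hα1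
  unfold hpp
  rw [Summable.tsum_eq_zero_add (hsummable i x)]
  have h0 : α * (1 - α) ^ 0 * (P ^ 0) i x = α * (if i = x then 1 else 0) := by
    simp [Matrix.one_apply]
  rw [h0]
  congr 1
  have hterm : ∀ ℓ : ℕ, α * (1 - α) ^ (ℓ + 1) * (P ^ (ℓ + 1)) i x
      = ∑ j, (1 - α) * (α * (1 - α) ^ ℓ * (P ^ ℓ) i j * P j x) := by
    intro ℓ
    have hP : (P ^ (ℓ + 1)) i x = ∑ j, (P ^ ℓ) i j * P j x := by
      rw [pow_succ, Matrix.mul_apply]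
    rw [hP, Finset.mul_sum]
    apply Finset.sum_congr rfl
    intro j _
    ring
  rw [tsum_congr hterm, Summable.tsum_finsetSum (fun j _ => by
    exact (((hsummable i j).mul_right (P j x)).mul_left (1 - α)))]
  rw [Finset.mul_sum]
  apply Finset.sum_congr rfl
  intro j _
  rw [tsum_mul_left, tsum_mul_right]

theorem push_invariant {U : Type*} [Fintype U] [DecidableEq U]
    (P : Matrix U U ℝ) (hnn : ∀ i j, 0 ≤ P i j) (hrow : ∀ i, ∑ j, P i j = 1)
    (ws : U → ℝ) (hws : ∀ u, 0 < ws u)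
    (hbal : ∀ ui uj, P ui uj / ws uj = P uj ui / ws ui)
    (α : ℝ) (hα0 : 0 < α) (hα1 : α < 1)
    (u ux : U) (πhat r : U → ℝ)
    (hπhat : ∀ ui, 0 ≤ πhat ui) (hr : ∀ ui, 0 ≤ r ui)
    (hinv : ∀ ui : U, hpp P α ui u = πhat ui + ∑ uj : U, hpp P α ui uj * r uj) :
    ∀ ui : U,
      hpp P α ui u =
        (if ui = ux then πhat ux + α * r ux else πhat ui) +
          ∑ uj : U,
            hpp P α ui uj *
              ((if uj = ux then (0 : ℝ) else r uj) + (1 - α) * P uj ux * r ux) := by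
  intro ui
  have hkey := hpp_key P hnn hrow α hα0 hα1 ui ux
  have hsplit : ∑ uj : U,
      hpp P α ui uj *
        ((if uj = ux then (0 : ℝ) else r uj) + (1 - α) * P uj ux * r ux)
      = (∑ uj : U, hpp P α ui uj * r uj) - hpp P α ui ux * r ux
        + (1 - α) * (∑ uj : U, hpp P α ui uj * P uj ux) * r ux := by
    have h1 : ∑ uj : U, hpp P α ui uj * (if uj = ux then (0 : ℝ) else r uj)
        = (∑ uj : U, hpp P α ui uj * r uj) - hpp P α ui ux * r ux := by
      have he : ∀ j : U, hpp P α ui j * (if j = ux then (0 : ℝ) else r j)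
          = hpp P α ui j * r j - (if j = ux then hpp P α ui ux * r ux else 0) := by
        intro j; by_cases hj : j = ux <;> simp [hj]
      simp only [he]
      rw [Finset.sum_sub_distrib, Finset.sum_ite_eq' Finset.univ ux]
      simp
    have h2 : ∑ uj : U, hpp P α ui uj * ((1 - α) * P uj ux * r ux)
        = (1 - α) * (∑ uj : U, hpp P α ui uj * P uj ux) * r ux := by
      rw [Finset.mul_sum, Finset.sum_mul]
      apply Finset.sum_congr rfl
      intro j _; ring
    calc ∑ uj : U, hpp P α ui uj *
          ((if uj = ux then (0 : ℝ) else r uj) + (1 - α) * P uj ux * r ux)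
        = (∑ uj : U, hpp P α ui uj * (if uj = ux then (0 : ℝ) else r uj))
          + ∑ uj : U, hpp P α ui uj * ((1 - α) * P uj ux * r ux) := by
          rw [← Finset.sum_add_distrib]
          apply Finset.sum_congr rfl
          intro j _; ring
      _ = _ := by rw [h1, h2]
  rw [hsplit, hinv ui]
  by_cases h : ui = ux
  · subst h
    rw [if_pos rfl]
    rw [if_pos rfl] at hkey
    rw [hkey]; ring
  · rw [if_neg h]
    rw [if_neg h] at hkey
    rw [hkey]; ring
end

section
/- If π̂ and r satisfy the invariant π(u_i,u) = π̂(u_i) + ∑_{u_j ∈ U} π(u_i,u_j)·r(u_j) for all u_i, with r nonnegative and ∑_{u_j ∈ U} r(u_j) ≤ ε_b, then 0 ≤ π(u_i,u) − π̂(u_i) ≤ ε_b for every u_i ∈ U. -/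
theorem invariant_small_total_residue {U : Type*} [Fintype U]
    (π : U → U → ℝ) (hπnn : ∀ ui uj, 0 ≤ π ui uj) (hπle : ∀ ui uj, π ui uj ≤ 1)
    (u : U) (πhat r : U → ℝ)
    (hπhat : ∀ ui, 0 ≤ πhat ui) (hrnn : ∀ uj, 0 ≤ r uj)
    (εb : ℝ) (hr : ∑ uj : U, r uj ≤ εb)
    (hinv : ∀ ui : U, π ui u = πhat ui + ∑ uj : U, π ui uj * r uj) :
    ∀ ui : U, 0 ≤ π ui u - πhat ui ∧ π ui u - πhat ui ≤ εb := by
  intro ui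
  have h := hinv ui
  have h1 : π ui u - πhat ui = ∑ uj : U, π ui uj * r uj := by linarith
  constructor
  · rw [h1]
    exact Finset.sum_nonneg fun j _ => mul_nonneg (hπnn ui j) (hrnn j)
  · rw [h1]
    calc ∑ uj : U, π ui uj * r uj ≤ ∑ uj : U, r uj := by
          apply Finset.sum_le_sum
          intro j _
          nlinarith [hπle ui j, hrnn j, hπnn ui j]
      _ ≤ εb := hr
end
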